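/- arXiv:1705.07096 — 4 statements merged into one kernel-verified Lean document; each statement's English description precedes it below -/
import Mathlib

section
/- For every initial condition x₀ ∈ B whose solution x(t) remains in B for all t ≥ 0, and for every V ∈ C¹(B), the long-time average satisfies Φ̄(x₀) ≤ max_{x ∈ B} { Φ(x) + f(x)·∇V(x) }. -/
open Filter MeasureTheory Set
open scoped Topology RealInnerProductSpace

/-- The long-time average of `Φ` along the trajectory `x`. -/
noncomputable def timeAvg {d : ℕ} (Φ : EuclideanSpace ℝ (Fin d) → ℝ)
    (x : ℝ → EuclideanSpace ℝ (Fin d)) : ℝ :=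
  Filter.limsup (fun T : ℝ => (1 / T) * ∫ t in Set.Ioc (0:ℝ) T, Φ (x t)) Filter.atTop

/-- For every initial condition `x₀ ∈ B` whose solution remains in `B`
for all `t ≥ 0`, and every `C¹` auxiliary function `V`, the long-time average of `Φ`
along the trajectory is bounded by `max_{x ∈ B} {Φ(x) + f(x)·∇V(x)}`. -/
theorem time_average_upper_bound {d : ℕ}
    (f : EuclideanSpace ℝ (Fin d) → EuclideanSpace ℝ (Fin d)) (hf : ContDiff ℝ 1 f)
    (B : Set (EuclideanSpace ℝ (Fin d))) (hB : IsCompact B)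
    (Φ : EuclideanSpace ℝ (Fin d) → ℝ) (hΦ : Continuous Φ)
    (x₀ : EuclideanSpace ℝ (Fin d)) (hx₀ : x₀ ∈ B)
    (x : ℝ → EuclideanSpace ℝ (Fin d)) (hx0 : x 0 = x₀)
    (hode : ∀ t ≥ (0:ℝ), HasDerivWithinAt x (f (x t)) (Set.Ici 0) t)
    (hxB : ∀ t ≥ (0:ℝ), x t ∈ B)
    (V : EuclideanSpace ℝ (Fin d) → ℝ) (hV : ContDiff ℝ 1 V) :
    timeAvg Φ x ≤ sSup ((fun y => Φ y + ⟪f y, gradient V y⟫) '' B) := by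
  set g : EuclideanSpace ℝ (Fin d) → ℝ := fun y => Φ y + ⟪f y, gradient V y⟫ with hg_def
  set M : ℝ := sSup (g '' B) with hM_def
  -- continuity facts
  have hgradc : Continuous (gradient V) :=
    (InnerProductSpace.toDual ℝ _).symm.continuous.comp (hV.continuous_fderiv one_ne_zero)
  have hgc : Continuous g :=
    hΦ.add ((hf.continuous).inner hgradc)
  have hxcont : ContinuousOn x (Ici 0) := fun t ht => (hode t ht).continuousWithinAt
  -- φ = derivative of V ∘ x
  set φ : ℝ → ℝ := fun t => ⟪f (x t), gradient V (x t)⟫ with hφ_def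
  have hφcont : ContinuousOn φ (Ici 0) :=
    (((hf.continuous.comp continuous_id).inner hgradc).comp_continuousOn hxcont)
  have hVx : ∀ t ≥ (0:ℝ), HasDerivWithinAt (fun s => V (x s)) (φ t) (Ici 0) t := by
    intro t ht
    have hdV := (hV.differentiable one_ne_zero (x t)).hasFDerivAt
    have h := hdV.comp_hasDerivWithinAt t (hode t ht)
    have heq : fderiv ℝ V (x t) (f (x t)) = φ t := by
      have hg := (hV.differentiable one_ne_zero (x t)).hasGradientAt
      rw [(hg.hasFDerivAt.unique (hV.differentiable one_ne_zero (x t)).hasFDerivAt).symm]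
      simp [hφ_def, InnerProductSpace.toDual_apply_apply, real_inner_comm, mul_comm]
    rwa [heq] at h
  -- bounds on B
  obtain ⟨CΦ, hCΦ⟩ := hB.exists_bound_of_continuousOn (hΦ.continuousOn)
  obtain ⟨CV, hCV⟩ := hB.exists_bound_of_continuousOn (hV.continuous.continuousOn)
  have hBdd : BddAbove (g '' B) := (hB.image hgc).bddAbove
  have hgle : ∀ t ≥ (0:ℝ), g (x t) ≤ M := fun t ht =>
    le_csSup hBdd (mem_image_of_mem g (hxB t ht))
  have hΦge : ∀ t ≥ (0:ℝ), -CΦ ≤ Φ (x t) := by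
    intro t ht
    have := hCΦ (x t) (hxB t ht)
    rw [Real.norm_eq_abs, abs_le] at this
    exact this.1
  -- integrability on Ioc 0 T for T ≥ 0
  have hint : ∀ T : ℝ, 0 ≤ T → ∀ (u : ℝ → ℝ), ContinuousOn u (Ici 0) →
      IntegrableOn u (Ioc 0 T) := by
    intro T hT u hu
    exact ((hu.mono Icc_subset_Ici_self).integrableOn_Icc).mono_set Ioc_subset_Icc_self
  have hΦxcont : ContinuousOn (fun t => Φ (x t)) (Ici 0) := hΦ.comp_continuousOn hxcont
  -- FTC for each T ≥ 0
  have hFTC : ∀ T : ℝ, 0 ≤ T → ∫ t in Ioc (0:ℝ) T, φ t = V (x T) - V (x 0) := by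
    intro T hT
    have h1 : ∫ t in (0:ℝ)..T, φ t = V (x T) - V (x 0) := by
      apply intervalIntegral.integral_eq_sub_of_hasDeriv_right_of_le hT
      · exact ((hV.continuous.comp_continuousOn hxcont).mono Icc_subset_Ici_self)
      · intro t ht
        exact (hVx t ht.1.le).mono (fun y hy => le_of_lt (lt_trans ht.1 hy))
      · exact (hφcont.mono Icc_subset_Ici_self).intervalIntegrable_of_Icc hT
    rw [← h1, intervalIntegral.integral_of_le hT]
  -- key eventual bound
  have hkey : ∀ T : ℝ, 1 ≤ T →
      (1 / T) * ∫ t in Ioc (0:ℝ) T, Φ (x t) ≤ M + (2 * CV) / T := by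
    intro T hT
    have hT0 : (0:ℝ) < T := lt_of_lt_of_le one_pos hT
    have hiΦ := hint T hT0.le _ hΦxcont
    have hiφ := hint T hT0.le _ hφcont
    have hig := hint T hT0.le (fun t => g (x t)) (hgc.comp_continuousOn hxcont)
    have hsplit : ∫ t in Ioc (0:ℝ) T, Φ (x t)
        = (∫ t in Ioc (0:ℝ) T, g (x t)) - ∫ t in Ioc (0:ℝ) T, φ t := by
      rw [← integral_sub hig hiφ]
      congr 1
      ext t
      simp [hg_def, hφ_def]
    have hgint : ∫ t in Ioc (0:ℝ) T, g (x t) ≤ T * M := by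
      have : ∫ t in Ioc (0:ℝ) T, g (x t) ≤ ∫ _t in Ioc (0:ℝ) T, M := by
        apply setIntegral_mono_on hig (integrableOn_const measure_Ioc_lt_top.ne)
          measurableSet_Ioc
        intro t ht
        exact hgle t ht.1.le
      simpa [Real.volume_Ioc, hT0.le] using this
    have hVbd : - (V (x T) - V (x 0)) ≤ 2 * CV := by
      have h1 := hCV (x T) (hxB T hT0.le)
      have h2 := hCV (x 0) (hxB 0 le_rfl)
      rw [Real.norm_eq_abs, abs_le] at h1 h2
      linarith [h1.1, h1.2, h2.1, h2.2]
    have hbound : ∫ t in Ioc (0:ℝ) T, Φ (x t) ≤ T * M + 2 * CV := by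
      rw [hsplit, hFTC T hT0.le]; linarith
    calc (1 / T) * ∫ t in Ioc (0:ℝ) T, Φ (x t)
        ≤ (1 / T) * (T * M + 2 * CV) := by
          apply mul_le_mul_of_nonneg_left hbound (by positivity)
      _ = M + (2 * CV) / T := by field_simp
  -- lower bound for coboundedness
  have hlow : ∀ T : ℝ, 1 ≤ T →
      -CΦ ≤ (1 / T) * ∫ t in Ioc (0:ℝ) T, Φ (x t) := by
    intro T hT
    have hT0 : (0:ℝ) < T := lt_of_lt_of_le one_pos hT
    have hiΦ := hint T hT0.le _ hΦxcont
    have : ∫ _t in Ioc (0:ℝ) T, (-CΦ) ≤ ∫ t in Ioc (0:ℝ) T, Φ (x t) := by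
      apply setIntegral_mono_on (integrableOn_const measure_Ioc_lt_top.ne) hiΦ
        measurableSet_Ioc
      intro t ht
      exact hΦge t ht.1.le
    have h2 : T * (-CΦ) ≤ ∫ t in Ioc (0:ℝ) T, Φ (x t) := by
      simpa [Real.volume_Ioc, hT0.le] using this
    calc -CΦ = (1 / T) * (T * (-CΦ)) := by field_simp
      _ ≤ (1 / T) * ∫ t in Ioc (0:ℝ) T, Φ (x t) :=
          mul_le_mul_of_nonneg_left h2 (by positivity)
  -- conclude via limsup
  have hvt : Tendsto (fun T : ℝ => M + (2 * CV) / T) atTop (𝓝 M) := by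
    have : Tendsto (fun T : ℝ => (2 * CV) / T) atTop (𝓝 0) :=
      tendsto_const_nhds.div_atTop tendsto_id
    simpa using tendsto_const_nhds.add this
  have hle : (fun T : ℝ => (1 / T) * ∫ t in Ioc (0:ℝ) T, Φ (x t))
      ≤ᶠ[atTop] fun T => M + (2 * CV) / T :=
    (eventually_ge_atTop 1).mono fun T hT => hkey T hT
  have hcu : IsCoboundedUnder (· ≤ ·) atTop
      (fun T : ℝ => (1 / T) * ∫ t in Ioc (0:ℝ) T, Φ (x t)) := by
    apply Filter.IsBoundedUnder.isCoboundedUnder_le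
    exact ⟨-CΦ, (eventually_ge_atTop 1).mono fun T hT => hlow T hT⟩
  have hbv : IsBoundedUnder (· ≤ ·) atTop (fun T : ℝ => M + (2 * CV) / T) :=
    hvt.isBoundedUnder_le
  calc timeAvg Φ x ≤ limsup (fun T : ℝ => M + (2 * CV) / T) atTop :=
        limsup_le_limsup hle hcu hbv
    _ = M := hvt.limsup_eq
end

section
/- Weak duality: sup_{x₀ ∈ B} Φ̄(x₀) ≤ inf_{V ∈ C¹(B)} max_{x ∈ B} { Φ(x) + f(x)·∇V(x) }, where the supremum is over all initial conditions in B and the infimum is over all continuously differentiable auxiliary functions on a neighborhood of B. -/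
open Filter MeasureTheory Set
open scoped Topology RealInnerProductSpace

/-- **weak duality.** The supremum over initial conditions in `B` of the
long-time average of `Φ` is bounded above by the infimum over `C¹` auxiliary functions `V`
of `max_{x ∈ B} {Φ(x) + f(x)·∇V(x)}`. -/
theorem weak_duality {d : ℕ}
    (f : EuclideanSpace ℝ (Fin d) → EuclideanSpace ℝ (Fin d)) (hf : ContDiff ℝ 1 f)
    (B : Set (EuclideanSpace ℝ (Fin d))) (hB : IsCompact B) (hBne : B.Nonempty)
    (Φ : EuclideanSpace ℝ (Fin d) → ℝ) (hΦ : Continuous Φ)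
    (φ : ℝ → EuclideanSpace ℝ (Fin d) → EuclideanSpace ℝ (Fin d))
    (hφ0 : ∀ x₀ ∈ B, φ 0 x₀ = x₀)
    (hφode : ∀ x₀ ∈ B, ∀ t ≥ (0:ℝ),
      HasDerivWithinAt (fun s => φ s x₀) (f (φ t x₀)) (Set.Ici 0) t)
    (hφB : ∀ x₀ ∈ B, ∀ t ≥ (0:ℝ), φ t x₀ ∈ B) :
    sSup ((fun x₀ => timeAvg Φ (fun t => φ t x₀)) '' B)
      ≤ sInf {b : ℝ | ∃ V : EuclideanSpace ℝ (Fin d) → ℝ, ContDiff ℝ 1 V ∧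
          b = sSup ((fun y => Φ y + ⟪f y, gradient V y⟫) '' B)} := by
  have hsetne : {b : ℝ | ∃ V : EuclideanSpace ℝ (Fin d) → ℝ, ContDiff ℝ 1 V ∧
      b = sSup ((fun y => Φ y + ⟪f y, gradient V y⟫) '' B)}.Nonempty :=
    ⟨_, (fun _ => (0:ℝ)), contDiff_const, rfl⟩
  apply le_csInf hsetne
  rintro b ⟨V, hV, rfl⟩
  apply csSup_le (hBne.image _)
  rintro a ⟨x₀, hx₀, rfl⟩
  -- notation
  set g : EuclideanSpace ℝ (Fin d) → ℝ := fun y => Φ y + ⟪f y, gradient V y⟫ with hg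
  have hgradc : Continuous (fun y => gradient V y) := by
    have h1 : Continuous (fderiv ℝ V) := hV.continuous_fderiv one_ne_zero
    exact (InnerProductSpace.toDual ℝ (EuclideanSpace ℝ (Fin d))).symm.continuous.comp h1
  have hgc : Continuous g := hΦ.add (hf.continuous.inner hgradc)
  set M : ℝ := sSup (g '' B) with hMdef
  have hM : ∀ y ∈ B, g y ≤ M := fun y hy =>
    le_csSup (hB.image hgc).bddAbove (mem_image_of_mem _ hy)
  obtain ⟨CV, hCV⟩ := hB.exists_bound_of_continuousOn hV.continuous.continuousOn
  obtain ⟨CΦ, hCΦ⟩ := hB.exists_bound_of_continuousOn hΦ.continuousOn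
  set x : ℝ → EuclideanSpace ℝ (Fin d) := fun t => φ t x₀ with hx
  have hxB : ∀ t ≥ (0:ℝ), x t ∈ B := hφB x₀ hx₀
  have hxd : ∀ t ≥ (0:ℝ), HasDerivWithinAt x (f (x t)) (Ici 0) t := hφode x₀ hx₀
  have hxc : ContinuousOn x (Ici 0) := fun t ht => (hxd t ht).continuousWithinAt
  have hxat : ∀ t : ℝ, 0 < t → HasDerivAt x (f (x t)) t := fun t ht =>
    (hxd t ht.le).hasDerivAt (Ici_mem_nhds ht)
  have hΦxc : ContinuousOn (fun s => Φ (x s)) (Ici 0) := hΦ.comp_continuousOn hxc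
  -- key pointwise bound on finite time integrals
  have key : ∀ T : ℝ, 0 ≤ T → (∫ s in (0:ℝ)..T, Φ (x s)) ≤ M * T + 2 * CV := by
    intro T hT
    set F : ℝ → ℝ := fun t => (∫ s in (0:ℝ)..t, Φ (x s)) + V (x t) - M * t with hF
    have hFc : ContinuousOn F (Icc 0 T) := by
      have hIcc : Icc (0:ℝ) T ⊆ Ici 0 := Icc_subset_Ici_self
      have hint : IntegrableOn (fun s => Φ (x s)) (uIcc (0:ℝ) T) := by
        rw [uIcc_of_le hT]
        exact (hΦxc.mono hIcc).integrableOn_compact isCompact_Icc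
      have h1 : ContinuousOn (fun t => ∫ s in (0:ℝ)..t, Φ (x s)) (Icc 0 T) := by
        have := intervalIntegral.continuousOn_primitive_interval (f := fun s => Φ (x s))
          (a := (0:ℝ)) (b := T) (μ := volume) hint
        rwa [uIcc_of_le hT] at this
      exact ((h1.add (hV.continuous.comp_continuousOn (hxc.mono hIcc))).sub
        (continuousOn_const.mul continuousOn_id))
    have hFd : ∀ t ∈ Ioo (0:ℝ) T, HasDerivAt F (g (x t) - M) t := by
      intro t ht
      have ht0 : (0:ℝ) < t := ht.1
      have htB : x t ∈ B := hxB t ht0.le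
      have hII : IntervalIntegrable (fun s => Φ (x s)) volume 0 t := by
        apply ContinuousOn.intervalIntegrable
        rw [uIcc_of_le ht0.le]
        exact hΦxc.mono Icc_subset_Ici_self
      have hmeas : StronglyMeasurableAtFilter (fun s => Φ (x s)) (𝓝 t) volume :=
        ⟨Ici 0, Ici_mem_nhds ht0, hΦxc.aestronglyMeasurable measurableSet_Ici⟩
      have hca : ContinuousAt (fun s => Φ (x s)) t :=
        (hΦxc t ht0.le).continuousAt (Ici_mem_nhds ht0)
      have hI : HasDerivAt (fun u => ∫ s in (0:ℝ)..u, Φ (x s)) (Φ (x t)) t :=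
        intervalIntegral.integral_hasDerivAt_right hII hmeas hca
      have hgrad : HasGradientAt V (gradient V (x t)) (x t) :=
        ((hV.differentiable one_ne_zero) (x t)).hasGradientAt
      have hfd : HasFDerivAt V
          (InnerProductSpace.toDualMap ℝ _ (gradient V (x t))) (x t) :=
        hasGradientAt_iff_hasFDerivAt.mp hgrad
      have hVx : HasDerivAt (fun u => V (x u)) (⟪gradient V (x t), f (x t)⟫) t := by
        have := hfd.comp_hasDerivAt t (hxat t ht0)
        simpa [Function.comp_def] using this
      have hlin : HasDerivAt (fun u : ℝ => M * u) M t := by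
        simpa using (hasDerivAt_id t).const_mul M
      have := (hI.add hVx).sub hlin
      have heq : Φ (x t) + ⟪gradient V (x t), f (x t)⟫ - M = g (x t) - M := by
        rw [hg]; rw [real_inner_comm]
      rw [heq] at this
      exact this
    have hanti : AntitoneOn F (Icc 0 T) := by
      apply antitoneOn_of_hasDerivWithinAt_nonpos (convex_Icc 0 T) hFc
      · intro t ht
        rw [interior_Icc] at ht
        exact ((hFd t ht).hasDerivWithinAt)
      · intro t ht
        rw [interior_Icc] at ht
        have := hM (x t) (hxB t ht.1.le)
        linarith
    have hFT : F T ≤ F 0 :=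
      hanti (left_mem_Icc.mpr hT) (right_mem_Icc.mpr hT) hT
    have hF0 : F 0 = V x₀ := by
      simp [hF, hx, hφ0 x₀ hx₀]
    have hVb1 : |V (x T)| ≤ CV := by
      have := hCV (x T) (hxB T hT); simpa using this
    have hVb2 : |V x₀| ≤ CV := by
      have := hCV x₀ hx₀; simpa using this
    rw [hF0] at hFT
    have : (∫ s in (0:ℝ)..T, Φ (x s)) + V (x T) - M * T ≤ V x₀ := hFT
    have h1 := abs_le.mp hVb1
    have h2 := abs_le.mp hVb2
    linarith
  -- lower bound on the averages
  have lower : ∀ T : ℝ, 1 ≤ T →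
      -CΦ ≤ (1 / T) * ∫ t in Set.Ioc (0:ℝ) T, Φ (x t) := by
    intro T hT
    have hT0 : (0:ℝ) < T := lt_of_lt_of_le one_pos hT
    have hintOn : IntegrableOn (fun s => Φ (x s)) (Ioc 0 T) := by
      exact ((hΦxc.mono Icc_subset_Ici_self).integrableOn_compact
        isCompact_Icc).mono_set Ioc_subset_Icc_self
    have hvol : (volume (Ioc (0:ℝ) T)).toReal = T := by
      rw [Real.volume_Ioc]
      rw [show T - 0 = T by ring, ENNReal.toReal_ofReal hT0.le]
    have hge : -CΦ * T ≤ ∫ t in Set.Ioc (0:ℝ) T, Φ (x t) := by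
      have := setIntegral_ge_of_const_le (c := -CΦ) (f := fun s => Φ (x s))
        measurableSet_Ioc (by simp [Real.volume_Ioc]) (fun s hs => by
          have := hCΦ (x s) (hxB s hs.1.le)
          have := abs_le.mp (by simpa using this)
          linarith) hintOn
      rwa [measureReal_def, hvol, smul_eq_mul, mul_comm] at this
    have h1T : (0:ℝ) ≤ 1 / T := by positivity
    calc -CΦ = (1 / T) * (-CΦ * T) := by field_simp
      _ ≤ (1 / T) * ∫ t in Set.Ioc (0:ℝ) T, Φ (x t) :=
          mul_le_mul_of_nonneg_left hge h1T
  -- upper bound eventually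
  have upper : ∀ᶠ T in atTop, (1 / T) * (∫ t in Set.Ioc (0:ℝ) T, Φ (x t))
      ≤ M + 2 * CV * (1 / T) := by
    filter_upwards [eventually_ge_atTop (1:ℝ)] with T hT
    have hT0 : (0:ℝ) < T := lt_of_lt_of_le one_pos hT
    have heq : (∫ t in Set.Ioc (0:ℝ) T, Φ (x t)) = ∫ s in (0:ℝ)..T, Φ (x s) :=
      (intervalIntegral.integral_of_le hT0.le).symm
    rw [heq]
    have hk := key T hT0.le
    have h1T : (0:ℝ) ≤ 1 / T := by positivity
    have := mul_le_mul_of_nonneg_left hk h1T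
    calc (1 / T) * ∫ s in (0:ℝ)..T, Φ (x s) ≤ (1 / T) * (M * T + 2 * CV) := this
      _ = M + 2 * CV * (1 / T) := by
          have hTne : T ≠ 0 := ne_of_gt hT0
          field_simp
  -- conclude via limsup
  have hlim : Tendsto (fun T : ℝ => M + 2 * CV * (1 / T)) atTop (𝓝 (M + 2 * CV * 0)) := by
    apply tendsto_const_nhds.add
    have h0 : Tendsto (fun T : ℝ => 1 / T) atTop (𝓝 0) := by
      simp only [one_div]; exact tendsto_inv_atTop_zero
    exact tendsto_const_nhds.mul h0
  have hcobdd : IsCoboundedUnder (· ≤ ·)  atTop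
      (fun T : ℝ => (1 / T) * ∫ t in Set.Ioc (0:ℝ) T, Φ (x t)) := by
    apply isCoboundedUnder_le_of_eventually_le atTop (x := -CΦ)
    filter_upwards [eventually_ge_atTop (1:ℝ)] with T hT using lower T hT
  have hbdd : IsBoundedUnder (· ≤ ·) atTop (fun T : ℝ => M + 2 * CV * (1 / T)) :=
    hlim.isBoundedUnder_le
  have : timeAvg Φ (fun t => φ t x₀)
      ≤ limsup (fun T : ℝ => M + 2 * CV * (1 / T)) atTop := by
    exact limsup_le_limsup upper hcobdd hbdd
  rw [hlim.limsup_eq] at this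
  simpa using this
end

section
/- The supremum of the long-time average over initial conditions in B is attained: there exists x₀* ∈ B such that Φ̄(x₀*) = sup_{x₀ ∈ B} Φ̄(x₀). -/
open Filter MeasureTheory Set
open scoped Topology RealInnerProductSpace

set_option synthInstance.maxHeartbeats 1000000
set_option maxHeartbeats 1000000

namespace SupTimeAvgAux

variable {d : ℕ}

local notation "X" => EuclideanSpace ℝ (Fin d)

/-- Continuity of a single trajectory. -/
lemma traj_cont (φ : ℝ → X → X) (B : Set X)
    (hφcont : ContinuousOn (fun p : ℝ × X => φ p.1 p.2) (Set.Ici 0 ×ˢ B))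
    {x : X} (hx : x ∈ B) : ContinuousOn (fun t => φ t x) (Set.Ici 0) := by
  have h1 : ContinuousOn (fun t : ℝ => ((t, x) : ℝ × X)) (Set.Ici 0) :=
    (continuous_id.prodMk continuous_const).continuousOn
  exact hφcont.comp h1 (fun t ht => ⟨ht, hx⟩)

/-- The semigroup property, from uniqueness of ODE solutions. -/
lemma semigroup (f : X → X) (hf : ContDiff ℝ 1 f)
    (B : Set X) (hB : IsCompact B)
    (φ : ℝ → X → X)
    (hφ0 : ∀ x₀ ∈ B, φ 0 x₀ = x₀)
    (hφode : ∀ x₀ ∈ B, ∀ t ≥ (0:ℝ),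
      HasDerivWithinAt (fun s => φ s x₀) (f (φ t x₀)) (Set.Ici 0) t)
    (hφB : ∀ x₀ ∈ B, ∀ t ≥ (0:ℝ), φ t x₀ ∈ B)
    (hφcont : ContinuousOn (fun p : ℝ × X => φ p.1 p.2) (Set.Ici 0 ×ˢ B))
    {x : X} (hx : x ∈ B) {s t : ℝ} (hs : 0 ≤ s) (ht : 0 ≤ t) :
    φ (s + t) x = φ t (φ s x) := by
  -- Lipschitz bound for f on a large closed ball containing B
  obtain ⟨R, hR⟩ := hB.isBounded.subset_closedBall 0
  set D : Set X := Metric.closedBall 0 R with hD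
  have hBD : B ⊆ D := hR
  obtain ⟨K, hK⟩ : ∃ K : NNReal, LipschitzOnWith K f D := by
    have hcont : ContinuousOn (fun z => ‖fderiv ℝ f z‖) D :=
      ((hf.continuous_fderiv one_ne_zero).norm).continuousOn
    obtain ⟨C, hC⟩ := (isCompact_closedBall (0:X) R).exists_bound_of_continuousOn hcont
    refine ⟨⟨max C 0, le_max_right _ _⟩, ?_⟩
    apply (convex_closedBall (0:X) R).lipschitzOnWith_of_nnnorm_hasFDerivWithin_le
      (f' := fun z => fderiv ℝ f z)
      (fun z hz => ((hf.differentiable one_ne_zero) z).hasFDerivAt.hasFDerivWithinAt)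
    intro z hz
    have h2 : ‖fderiv ℝ f z‖ ≤ max C 0 :=
      le_max_iff.mpr (Or.inl (by simpa using hC z hz))
    apply NNReal.coe_le_coe.mp
    exact h2
  -- uniqueness on [0, b] for every b
  have key : ∀ b : ℝ, ∀ u ∈ Set.Icc (0:ℝ) b, φ (s + u) x = φ u (φ s x) := by
    intro b
    set y := φ s x with hy
    have hyB : y ∈ B := hφB x hx s hs
    have hcont1 : ContinuousOn (fun u => φ (s + u) x) (Set.Icc 0 b) := by
      have := (traj_cont φ B hφcont hx).comp
        (Continuous.continuousOn (by continuity) : ContinuousOn (fun u : ℝ => s + u) (Set.Icc 0 b))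
        (fun u hu => by simpa using add_nonneg hs hu.1)
      exact this
    have hcont2 : ContinuousOn (fun u => φ u y) (Set.Icc 0 b) :=
      (traj_cont φ B hφcont hyB).mono (fun u hu => hu.1)
    have hder1 : ∀ u ∈ Set.Ico (0:ℝ) b,
        HasDerivWithinAt (fun u => φ (s + u) x) (f (φ (s + u) x)) (Set.Ici u) u := by
      intro u hu
      have h0 := hφode x hx (s + u) (add_nonneg hs hu.1)
      have hcomp := HasDerivWithinAt.scomp (t' := Set.Ici (0:ℝ)) u h0
        (((hasDerivAt_id u).const_add s).hasDerivWithinAt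
          (s := (fun u : ℝ => s + u) ⁻¹' (Set.Ici 0))) (fun z hz => hz)
      have hcomp' : HasDerivWithinAt (fun u => φ (s + u) x) (f (φ (s + u) x))
          ((fun u : ℝ => s + u) ⁻¹' (Set.Ici 0)) u := by
        convert hcomp using 1
        case e'_9 => exact (one_smul _ _).symm
        all_goals rfl
      refine hcomp'.mono fun z hz => ?_
      simp only [Set.mem_preimage, Set.mem_Ici]
      exact add_nonneg hs (le_trans hu.1 hz)
    have hder2 : ∀ u ∈ Set.Ico (0:ℝ) b,
        HasDerivWithinAt (fun u => φ u y) (f (φ u y)) (Set.Ici u) u := by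
      intro u hu
      exact (hφode y hyB u hu.1).mono (fun z hz => le_trans hu.1 hz)
    have hmem1 : ∀ u ∈ Set.Ico (0:ℝ) b, φ (s + u) x ∈ D :=
      fun u hu => hBD (hφB x hx (s + u) (add_nonneg hs hu.1))
    have hmem2 : ∀ u ∈ Set.Ico (0:ℝ) b, φ u y ∈ D :=
      fun u hu => hBD (hφB y hyB u hu.1)
    have h00 : φ (s + 0) x = φ 0 y := by
      rw [add_zero, hφ0 y hyB]
    exact ODE_solution_unique_of_mem_Icc_right (v := fun _ z => f z) (s := fun _ => D)
      (fun _ _ => hK) hcont1 hder1 hmem1 hcont2 hder2 hmem2 h00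
  exact key t t ⟨ht, le_rfl⟩


/-- The integral of `Φ` along the trajectory of `x` from time `0` to `T`. -/
noncomputable def Iz (Φ : X → ℝ) (φ : ℝ → X → X) (x : X) (T : ℝ) : ℝ :=
  ∫ t in (0:ℝ)..T, Φ (φ t x)

section Basic

lemma integrand_cont (Φ : X → ℝ) (φ : ℝ → X → X) (B : Set X)
    (hΦ : Continuous Φ)
    (hφcont : ContinuousOn (fun p : ℝ × X => φ p.1 p.2) (Set.Ici 0 ×ˢ B))
    {x : X} (hx : x ∈ B) :
    ContinuousOn (fun t => Φ (φ t x)) (Set.Ici 0) :=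
  hΦ.comp_continuousOn (traj_cont φ B hφcont hx)

lemma integrable_traj (Φ : X → ℝ) (φ : ℝ → X → X) (B : Set X)
    (hΦ : Continuous Φ)
    (hφcont : ContinuousOn (fun p : ℝ × X => φ p.1 p.2) (Set.Ici 0 ×ˢ B))
    {x : X} (hx : x ∈ B) {a b : ℝ} (ha : 0 ≤ a) (hb : 0 ≤ b) :
    IntervalIntegrable (fun t => Φ (φ t x)) MeasureTheory.volume a b :=
  ((integrand_cont Φ φ B hΦ hφcont hx).mono
    (fun t ht => le_trans (le_min ha hb) ht.1)).intervalIntegrable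

lemma Iz_sub_le (Φ : X → ℝ) (φ : ℝ → X → X) (B : Set X)
    (hΦ : Continuous Φ)
    (hφcont : ContinuousOn (fun p : ℝ × X => φ p.1 p.2) (Set.Ici 0 ×ˢ B))
    (hφB : ∀ x₀ ∈ B, ∀ t ≥ (0:ℝ), φ t x₀ ∈ B)
    {C : ℝ} (hC : ∀ z ∈ B, |Φ z| ≤ C)
    {x : X} (hx : x ∈ B) {a b : ℝ} (ha : 0 ≤ a) (hab : a ≤ b) :
    |Iz Φ φ x b - Iz Φ φ x a| ≤ C * (b - a) := by
  have hb : 0 ≤ b := le_trans ha hab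
  have heq : Iz Φ φ x b - Iz Φ φ x a = ∫ t in a..b, Φ (φ t x) := by
    rw [Iz, Iz, ← intervalIntegral.integral_add_adjacent_intervals
      (integrable_traj Φ φ B hΦ hφcont hx le_rfl ha)
      (integrable_traj Φ φ B hΦ hφcont hx ha hb)]
    ring
  rw [heq]
  have h2 : ∀ t ∈ Set.uIoc a b, ‖Φ (φ t x)‖ ≤ C := by
    intro t ht
    rw [Set.uIoc_of_le hab] at ht
    exact hC _ (hφB x hx t (le_trans ha (le_of_lt ht.1)))
  have := intervalIntegral.norm_integral_le_of_norm_le_const h2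
  rwa [Real.norm_eq_abs, abs_of_nonneg (by linarith : (0:ℝ) ≤ b - a)] at this

lemma Iz_abs_le (Φ : X → ℝ) (φ : ℝ → X → X) (B : Set X)
    (hΦ : Continuous Φ)
    (hφcont : ContinuousOn (fun p : ℝ × X => φ p.1 p.2) (Set.Ici 0 ×ˢ B))
    (hφB : ∀ x₀ ∈ B, ∀ t ≥ (0:ℝ), φ t x₀ ∈ B)
    {C : ℝ} (hC : ∀ z ∈ B, |Φ z| ≤ C)
    {x : X} (hx : x ∈ B) {T : ℝ} (hT : 0 ≤ T) :
    |Iz Φ φ x T| ≤ C * T := by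
  have h0 : Iz Φ φ x 0 = 0 := by simp [Iz]
  have := Iz_sub_le Φ φ B hΦ hφcont hφB hC hx le_rfl hT
  rw [h0] at this
  simpa using this

lemma Iz_shift (Φ : X → ℝ) (φ : ℝ → X → X) (B : Set X)
    (hΦ : Continuous Φ)
    (hφcont : ContinuousOn (fun p : ℝ × X => φ p.1 p.2) (Set.Ici 0 ×ˢ B))
    (hsg : ∀ x ∈ B, ∀ s ≥ (0:ℝ), ∀ t ≥ (0:ℝ), φ (s + t) x = φ t (φ s x))
    {x : X} (hx : x ∈ B) {s T : ℝ} (hs : 0 ≤ s) (hT : 0 ≤ T) :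
    Iz Φ φ (φ s x) T = Iz Φ φ x (s + T) - Iz Φ φ x s := by
  have hadj := intervalIntegral.integral_add_adjacent_intervals
    (integrable_traj Φ φ B hΦ hφcont hx le_rfl hs)
    (integrable_traj Φ φ B hΦ hφcont hx (a := s) (b := s + T) hs (by linarith))
  have hshift : (∫ t in (0:ℝ)..T, Φ (φ (t + s) x)) = ∫ t in s..(s+T), Φ (φ t x) := by
    have := intervalIntegral.integral_comp_add_right (a := (0:ℝ)) (b := T)
      (f := fun t => Φ (φ t x)) s
    rw [this, zero_add, add_comm]
  have hcongr : (∫ t in (0:ℝ)..T, Φ (φ (t + s) x)) = Iz Φ φ (φ s x) T := by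
    rw [Iz]
    apply intervalIntegral.integral_congr
    intro t ht
    rw [Set.uIcc_of_le hT] at ht
    show Φ (φ (t + s) x) = Φ (φ t (φ s x))
    rw [add_comm, hsg x hx s hs t ht.1]
  rw [← hcongr, hshift, Iz, Iz, ← hadj]
  ring

end Basic


lemma Iz_contOn (Φ : X → ℝ) (φ : ℝ → X → X) (B : Set X)
    (hΦ : Continuous Φ)
    (hφcont : ContinuousOn (fun p : ℝ × X => φ p.1 p.2) (Set.Ici 0 ×ˢ B))
    {m : ℝ} (hm : 0 ≤ m) :
    ContinuousOn (fun x => Iz Φ φ x m) B := by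
  set F : ↥B → ℝ → ℝ := fun x t => Φ (φ (max t 0) (x : X)) with hF
  have hFc : Continuous (Function.uncurry F) := by
    have hg : Continuous (fun p : ↥B × ℝ => ((max p.2 0, (p.1 : X)) : ℝ × X)) := by
      continuity
    have hmem : ∀ p : ↥B × ℝ, ((max p.2 0, (p.1 : X)) : ℝ × X) ∈ Set.Ici 0 ×ˢ B :=
      fun p => ⟨Set.mem_Ici.mpr (le_max_right _ _), p.1.2⟩
    have : Continuous (fun p : ↥B × ℝ => φ (max p.2 0) (p.1 : X)) :=
      hφcont.comp_continuous hg hmem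
    exact hΦ.comp this
  have hcont : Continuous (fun x : ↥B => ∫ t in (0:ℝ)..m, F x t) :=
    intervalIntegral.continuous_parametric_intervalIntegral_of_continuous' hFc 0 m
  have heq : ∀ x : ↥B, (∫ t in (0:ℝ)..m, F x t) = Iz Φ φ (x : X) m := by
    intro x
    rw [Iz]
    apply intervalIntegral.integral_congr
    intro t ht
    rw [Set.uIcc_of_le hm] at ht
    simp only [hF, max_eq_left ht.1]
  rw [continuousOn_iff_continuous_restrict]
  have : Set.restrict B (fun x => Iz Φ φ x m) = fun x : ↥B => ∫ t in (0:ℝ)..m, F x t := by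
    funext x
    rw [heq]
    rfl
  change Continuous (Set.restrict B (fun x => Iz Φ φ x m))
  rw [this]
  exact hcont


/-- Block decomposition upper bound: on a long horizon, the average is nearly bounded
by the supremum of window averages. -/
lemma Iz_block_bound (Φ : X → ℝ) (φ : ℝ → X → X) (B : Set X)
    (hΦ : Continuous Φ)
    (hφcont : ContinuousOn (fun p : ℝ × X => φ p.1 p.2) (Set.Ici 0 ×ˢ B))
    (hφB : ∀ x₀ ∈ B, ∀ t ≥ (0:ℝ), φ t x₀ ∈ B)
    (hsg : ∀ x ∈ B, ∀ s ≥ (0:ℝ), ∀ t ≥ (0:ℝ), φ (s + t) x = φ t (φ s x))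
    {C um m T : ℝ} (hC : ∀ z ∈ B, |Φ z| ≤ C) (hum : |um| ≤ C)
    (hm : 0 < m) (hT : 0 < T)
    (hu : ∀ y ∈ B, Iz Φ φ y m ≤ m * um)
    {x : X} (hx : x ∈ B) :
    Iz Φ φ x T ≤ T * um + 2 * C * m := by
  have hC0 : 0 ≤ C := le_trans (abs_nonneg _) hum
  set n : ℕ := ⌈T / m⌉₊ with hn
  have hTm : 0 < T / m := div_pos hT hm
  have hn1 : T ≤ n * m := by
    have h1 := mul_le_mul_of_nonneg_right (Nat.le_ceil (T / m)) (le_of_lt hm)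
    rwa [div_mul_cancel₀ _ (ne_of_gt hm)] at h1
  have hn2 : (n : ℝ) * m < T + m := by
    have h2 : ((⌈T / m⌉₊ : ℕ) : ℝ) < T / m + 1 := Nat.ceil_lt_add_one (le_of_lt hTm)
    have h3 := mul_lt_mul_of_pos_right h2 hm
    rw [add_mul, div_mul_cancel₀ _ (ne_of_gt hm), one_mul] at h3
    exact h3
  have claim : ∀ k : ℕ, Iz Φ φ x ((k : ℝ) * m) ≤ (k : ℝ) * (m * um) := by
    intro k
    induction k with
    | zero => simp [Iz]
    | succ k ih =>
      have hkm : (0:ℝ) ≤ (k : ℝ) * m := mul_nonneg (Nat.cast_nonneg k) (le_of_lt hm)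
      have hshift := Iz_shift Φ φ B hΦ hφcont hsg hx hkm (le_of_lt hm)
      have hmemk : φ ((k : ℝ) * m) x ∈ B := hφB x hx _ hkm
      have hub := hu _ hmemk
      have heq : ((k : ℝ) + 1) * m = (k : ℝ) * m + m := by ring
      push_cast
      rw [heq]
      have : Iz Φ φ x ((k : ℝ) * m + m) = Iz Φ φ x ((k : ℝ) * m) + Iz Φ φ (φ ((k:ℝ)*m) x) m := by
        rw [hshift]; ring
      rw [this]
      nlinarith
  have hsub := Iz_sub_le Φ φ B hΦ hφcont hφB hC hx (le_of_lt hT) hn1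
  have h3 : Iz Φ φ x T ≤ Iz Φ φ x ((n:ℝ) * m) + C * ((n:ℝ) * m - T) := by
    have := abs_le.mp hsub
    linarith [this.1, this.2]
  have h4 := claim n
  have h5 : (n:ℝ) * (m * um) ≤ T * um + m * C := by
    have hd : 0 ≤ (n:ℝ) * m - T := by linarith
    have hd2 : (n:ℝ) * m - T ≤ m := by linarith
    have : ((n:ℝ) * m - T) * um ≤ m * C := by
      calc ((n:ℝ) * m - T) * um ≤ |((n:ℝ) * m - T) * um| := le_abs_self _
      _ = ((n:ℝ) * m - T) * |um| := by rw [abs_mul, abs_of_nonneg hd]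
      _ ≤ m * C := by nlinarith [abs_nonneg um]
    nlinarith
  have h6 : C * ((n:ℝ) * m - T) ≤ C * m := by nlinarith
  nlinarith

/-- Continuity of the primitive `J`. -/
lemma Iz_cont_time (Φ : X → ℝ) (φ : ℝ → X → X) (B : Set X)
    (hΦ : Continuous Φ)
    (hφcont : ContinuousOn (fun p : ℝ × X => φ p.1 p.2) (Set.Ici 0 ×ˢ B))
    (hφB : ∀ x₀ ∈ B, ∀ t ≥ (0:ℝ), φ t x₀ ∈ B)
    {C : ℝ} (hC : ∀ z ∈ B, |Φ z| ≤ C)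
    {x : X} (hx : x ∈ B) :
    ContinuousOn (fun t => Iz Φ φ x t) (Set.Ici 0) := by
  have hC0 : 0 ≤ C := le_trans (abs_nonneg _) (hC x hx)
  have hlip : LipschitzOnWith C.toNNReal (fun t => Iz Φ φ x t) (Set.Ici 0) := by
    apply LipschitzOnWith.of_dist_le_mul
    intro a ha b hb
    rw [Real.dist_eq, Real.dist_eq, Real.coe_toNNReal C hC0]
    rcases le_total b a with h | h
    · have := Iz_sub_le Φ φ B hΦ hφcont hφB hC hx hb h
      rw [abs_of_nonneg (by linarith : (0:ℝ) ≤ a - b)]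
      exact this
    · have := Iz_sub_le Φ φ B hΦ hφcont hφB hC hx ha h
      rw [abs_of_nonpos (by linarith : a - b ≤ 0), abs_sub_comm]
      linarith
  exact hlip.continuousOn


/-- Lower bound: the time-average of window averages along the trajectory is nearly
bounded below by the full average. -/
lemma window_lower (Φ : X → ℝ) (φ : ℝ → X → X) (B : Set X)
    (hΦ : Continuous Φ)
    (hφcont : ContinuousOn (fun p : ℝ × X => φ p.1 p.2) (Set.Ici 0 ×ˢ B))
    (hφB : ∀ x₀ ∈ B, ∀ t ≥ (0:ℝ), φ t x₀ ∈ B)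
    (hsg : ∀ x ∈ B, ∀ s ≥ (0:ℝ), ∀ t ≥ (0:ℝ), φ (s + t) x = φ t (φ s x))
    {C m T : ℝ} (hC : ∀ z ∈ B, |Φ z| ≤ C)
    (hm : 0 < m) (hT : 0 < T)
    {x : X} (hx : x ∈ B) :
    m * Iz Φ φ x T - 2 * C * m ^ 2 ≤ ∫ t in (0:ℝ)..T, Iz Φ φ (φ t x) m := by
  have hC0 : 0 ≤ C := le_trans (abs_nonneg _) (hC x hx)
  set J : ℝ → ℝ := fun t => Iz Φ φ x t with hJ
  have hJcont : ContinuousOn J (Set.Ici 0) :=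
    Iz_cont_time Φ φ B hΦ hφcont hφB hC hx
  have hJint : ∀ a b : ℝ, 0 ≤ a → 0 ≤ b →
      IntervalIntegrable J MeasureTheory.volume a b := by
    intro a b ha hb
    exact (hJcont.mono (fun t ht => le_trans (le_min ha hb) ht.1)).intervalIntegrable
  -- identity: ∫₀ᵀ Iz (φ t x) m dt = ∫_T^{T+m} J - ∫_0^m J
  have hcongr : (∫ t in (0:ℝ)..T, Iz Φ φ (φ t x) m)
      = ∫ t in (0:ℝ)..T, (J (t + m) - J t) := by
    apply intervalIntegral.integral_congr
    intro t ht
    rw [Set.uIcc_of_le (le_of_lt hT)] at ht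
    show Iz Φ φ (φ t x) m = J (t + m) - J t
    rw [Iz_shift Φ φ B hΦ hφcont hsg hx ht.1 (le_of_lt hm)]
  have hint1 : IntervalIntegrable (fun t => J (t + m)) MeasureTheory.volume 0 T := by
    have h1 := (hJint m (T + m) (le_of_lt hm) (by linarith)).comp_add_right m
    simpa using h1
  have hsplit : (∫ t in (0:ℝ)..T, (J (t + m) - J t))
      = (∫ t in (0:ℝ)..T, J (t + m)) - ∫ t in (0:ℝ)..T, J t :=
    intervalIntegral.integral_sub hint1 (hJint 0 T le_rfl (le_of_lt hT))
  have hshift : (∫ t in (0:ℝ)..T, J (t + m)) = ∫ t in m..(T + m), J t := by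
    rw [intervalIntegral.integral_comp_add_right (a := (0:ℝ)) (b := T) (f := J) m,
      zero_add, add_comm]
  have hchasles1 : (∫ t in m..(T + m), J t)
      = (∫ t in m..T, J t) + ∫ t in T..(T + m), J t :=
    (intervalIntegral.integral_add_adjacent_intervals
      (hJint m T (le_of_lt hm) (le_of_lt hT))
      (hJint T (T + m) (le_of_lt hT) (by linarith))).symm
  have hchasles2 : (∫ t in (0:ℝ)..T, J t)
      = (∫ t in (0:ℝ)..m, J t) + ∫ t in m..T, J t :=
    (intervalIntegral.integral_add_adjacent_intervals
      (hJint 0 m le_rfl (le_of_lt hm))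
      (hJint m T (le_of_lt hm) (le_of_lt hT))).symm
  -- lower bound for ∫_T^{T+m} J
  have hlow : m * J T - C * m ^ 2 ≤ ∫ t in T..(T + m), J t := by
    have hmono : ∀ t ∈ Set.Icc T (T + m), J T - C * m ≤ J t := by
      intro t ht
      have hs := Iz_sub_le Φ φ B hΦ hφcont hφB hC hx (le_of_lt hT) ht.1
      have := (abs_le.mp hs).1
      have htm : t - T ≤ m := by linarith [ht.2]
      nlinarith
    have hintc : (∫ _ in T..(T + m), (J T - C * m)) = m * (J T - C * m) := by
      rw [intervalIntegral.integral_const]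
      simp only [smul_eq_mul]
      ring
    have := intervalIntegral.integral_mono_on (by linarith : T ≤ T + m)
      intervalIntegrable_const (hJint T (T + m) (le_of_lt hT) (by linarith)) hmono
    rw [hintc] at this
    nlinarith
  -- upper bound for ∫_0^m J
  have hup : (∫ t in (0:ℝ)..m, J t) ≤ C * m ^ 2 := by
    have hmono : ∀ t ∈ Set.Icc (0:ℝ) m, J t ≤ C * m := by
      intro t ht
      have := (abs_le.mp (Iz_abs_le Φ φ B hΦ hφcont hφB hC hx ht.1)).2
      nlinarith [ht.2, ht.1, hC0]
    have hintc : (∫ _ in (0:ℝ)..m, (C * m)) = m * (C * m) := by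
      rw [intervalIntegral.integral_const]
      simp [smul_eq_mul]
    have := intervalIntegral.integral_mono_on (le_of_lt hm)
      (hJint 0 m le_rfl (le_of_lt hm)) intervalIntegrable_const hmono
    rw [hintc] at this
    nlinarith
  rw [hcongr, hsplit, hshift, hchasles1, hchasles2]
  have : J T = Iz Φ φ x T := rfl
  nlinarith


/-- Master lemma: there is a point maximizing the limsup time-average. -/
lemma master (f : X → X) (hf : ContDiff ℝ 1 f)
    (B : Set X) (hB : IsCompact B) (hBne : B.Nonempty)
    (Φ : X → ℝ) (hΦ : Continuous Φ)
    (φ : ℝ → X → X)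
    (hφ0 : ∀ x₀ ∈ B, φ 0 x₀ = x₀)
    (hφode : ∀ x₀ ∈ B, ∀ t ≥ (0:ℝ),
      HasDerivWithinAt (fun s => φ s x₀) (f (φ t x₀)) (Set.Ici 0) t)
    (hφB : ∀ x₀ ∈ B, ∀ t ≥ (0:ℝ), φ t x₀ ∈ B)
    (hφcont : ContinuousOn (fun p : ℝ × X => φ p.1 p.2) (Set.Ici 0 ×ˢ B)) :
    ∃ x₀ ∈ B, ∀ x ∈ B,
      Filter.limsup (fun T : ℝ => (1 / T) * Iz Φ φ x T) Filter.atTop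
        ≤ Filter.limsup (fun T : ℝ => (1 / T) * Iz Φ φ x₀ T) Filter.atTop := by
  classical
  have hsg : ∀ x ∈ B, ∀ s ≥ (0:ℝ), ∀ t ≥ (0:ℝ), φ (s + t) x = φ t (φ s x) :=
    fun x hx s hs t ht => semigroup f hf B hB φ hφ0 hφode hφB hφcont hx hs ht
  -- the bound C ≥ 1
  obtain ⟨C₀, hC₀⟩ := hB.exists_bound_of_continuousOn hΦ.continuousOn
  set C : ℝ := max C₀ 1 with hCdef
  have hC1 : (1:ℝ) ≤ C := le_max_right _ _
  have hC0 : (0:ℝ) < C := lt_of_lt_of_le one_pos hC1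
  have hC : ∀ z ∈ B, |Φ z| ≤ C := by
    intro z hz
    exact le_trans (by simpa using hC₀ z hz) (le_max_left _ _)
  -- the average
  set avg : X → ℝ → ℝ := fun x T => (1/T) * Iz Φ φ x T with havg
  have havgabs : ∀ x ∈ B, ∀ T : ℝ, 0 < T → |avg x T| ≤ C := by
    intro x hx T hT
    have := Iz_abs_le Φ φ B hΦ hφcont hφB hC hx (le_of_lt hT)
    rw [havg]
    simp only [abs_mul, abs_of_nonneg (by positivity : (0:ℝ) ≤ 1/T)]
    rw [div_mul_eq_mul_div, one_mul, div_le_iff₀ hT]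
    linarith [this]
  -- the sup of window averages
  set u : ℝ → ℝ := fun m => sSup ((fun x => avg x m) '' B) with hu
  have hbddA : ∀ m : ℝ, 0 < m → BddAbove ((fun x => avg x m) '' B) := by
    intro m hm
    refine ⟨C, ?_⟩
    rintro v ⟨x, hx, rfl⟩
    exact (abs_le.mp (havgabs x hx m hm)).2
  have hne : ∀ m : ℝ, ((fun x => avg x m) '' B).Nonempty := fun m => hBne.image _
  have hu_le : ∀ m : ℝ, 0 < m → ∀ y ∈ B, avg y m ≤ u m :=
    fun m hm y hy => le_csSup (hbddA m hm) ⟨y, hy, rfl⟩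
  have hu_abs : ∀ m : ℝ, 0 < m → |u m| ≤ C := by
    intro m hm
    obtain ⟨y₀, hy₀⟩ := hBne
    rw [abs_le]
    constructor
    · linarith [(abs_le.mp (havgabs y₀ hy₀ m hm)).1, hu_le m hm y₀ hy₀]
    · exact csSup_le (hne m) (by rintro v ⟨x, hx, rfl⟩; exact (abs_le.mp (havgabs x hx m hm)).2)
  -- block bound in avg form
  have hblock : ∀ m T : ℝ, 0 < m → 0 < T → ∀ x ∈ B, avg x T ≤ u m + 2*C*m/T := by
    intro m T hm hT x hx
    have hIu : ∀ y ∈ B, Iz Φ φ y m ≤ m * u m := by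
      intro y hy
      have h1 := hu_le m hm y hy
      have : Iz Φ φ y m = m * avg y m := by
        rw [havg]; field_simp
      rw [this]
      nlinarith
    have := Iz_block_bound Φ φ B hΦ hφcont hφB hsg hC (hu_abs m hm) hm hT hIu hx
    show 1/T * Iz Φ φ x T ≤ u m + 2*C*m/T
    have h2 : (1/T) * Iz Φ φ x T ≤ (1/T) * (T * u m + 2*C*m) :=
      mul_le_mul_of_nonneg_left this (by positivity)
    refine le_trans h2 (le_of_eq ?_)
    field_simp
  -- the candidate supremum
  set Shat : ℝ := sInf (u '' Set.Ici 1) with hShat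
  have hbddu : BddBelow (u '' Set.Ici 1) := by
    refine ⟨-C, ?_⟩
    rintro v ⟨m, hm, rfl⟩
    exact (abs_le.mp (hu_abs m (lt_of_lt_of_le one_pos hm))).1
  have hS_lb : ∀ m : ℝ, 1 ≤ m → Shat ≤ u m :=
    fun m hm => csInf_le hbddu ⟨m, hm, rfl⟩
  -- good windows exist at all scales
  have hgoodm : ∀ β : ℝ, 0 < β → ∀ i₀ : ℝ, ∃ m : ℝ, i₀ ≤ m ∧ 1 ≤ m ∧ u m ≤ Shat + β := by
    intro β hβ i₀
    have hlt : Shat < Shat + β/2 := by linarith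
    have hne1 : (u '' Set.Ici 1).Nonempty := ⟨u 1, ⟨1, Set.mem_Ici.mpr le_rfl, rfl⟩⟩
    obtain ⟨v, hvmem, hvlt⟩ := exists_lt_of_csInf_lt hne1 hlt
    obtain ⟨m₀, hm₀, rfl⟩ := hvmem
    have hm₀pos : 0 < m₀ := lt_of_lt_of_le one_pos hm₀
    set M : ℝ := max i₀ (max 1 (8*C*m₀/β)) with hM
    have hM1 : (1:ℝ) ≤ M := le_trans (le_max_left 1 _) (le_max_right i₀ _)
    have hMpos : 0 < M := lt_of_lt_of_le one_pos hM1
    refine ⟨M, le_max_left _ _, hM1, ?_⟩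
    have hsup : u M ≤ u m₀ + 2*C*m₀/M := by
      apply csSup_le (hne M)
      rintro v ⟨x, hx, rfl⟩
      exact hblock m₀ M hm₀pos hMpos x hx
    have hMge : 8*C*m₀/β ≤ M := le_trans (le_max_right 1 _) (le_max_right i₀ _)
    have hfrac : 2*C*m₀/M ≤ β/4 := by
      rw [div_le_iff₀ hMpos]
      have h8 : 8*C*m₀/β * (β/4) = 2*C*m₀ := by field_simp; ring
      nlinarith [mul_le_mul_of_nonneg_right hMge (by positivity : (0:ℝ) ≤ β/4)]
    linarith
  -- choose windows
  have hm_choice : ∃ m : ℕ → ℝ, ∀ i : ℕ, (i+1 : ℝ) ≤ m i ∧ 1 ≤ m i ∧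
      u (m i) ≤ Shat + (2:ℝ)⁻¹^i/(8*(i+1)) := by
    have : ∀ i : ℕ, ∃ mi : ℝ, (i+1 : ℝ) ≤ mi ∧ 1 ≤ mi ∧
        u mi ≤ Shat + (2:ℝ)⁻¹^i/(8*(i+1)) := by
      intro i
      obtain ⟨mi, h1, h2, h3⟩ := hgoodm ((2:ℝ)⁻¹^i/(8*(i+1))) (by positivity) (i+1)
      exact ⟨mi, h1, h2, h3⟩
    exact ⟨fun i => (this i).choose, fun i => (this i).choose_spec⟩
  obtain ⟨m, hm⟩ := hm_choice
  have hmpos : ∀ i : ℕ, 0 < m i := fun i => lt_of_lt_of_le one_pos (hm i).2.1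
  -- approximate maximizers at all scales simultaneously
  have hyj : ∀ j : ℕ, ∃ y ∈ B, ∀ i < j, Shat - 1/(i+1) ≤ avg y (m i) := by
    intro j
    set Mj : ℝ := ∑ i ∈ Finset.range j, (i+1:ℝ) * m i with hMjdef
    set Wj : ℝ := ∑ i ∈ Finset.range j, (i+1:ℝ) with hWjdef
    have hMj0 : 0 ≤ Mj := Finset.sum_nonneg (fun i _ => mul_nonneg (by positivity) (hmpos i).le)
    have hWj0 : 0 ≤ Wj := Finset.sum_nonneg (fun i _ => by positivity)
    set η : ℝ := 1/(4*(Wj+1)) with hηdef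
    have hη : 0 < η := by positivity
    set T : ℝ := max 1 (8*C*(Mj+1)) with hTdef
    have hT1 : (1:ℝ) ≤ T := le_max_left _ _
    have hTpos : (0:ℝ) < T := lt_of_lt_of_le one_pos hT1
    have hTge : 8*C*(Mj+1) ≤ T := le_max_right _ _
    -- a near-maximizer on horizon T
    have h1 : Shat - η < u T := lt_of_lt_of_le (by linarith [hS_lb T hT1]) le_rfl
    obtain ⟨v, ⟨x₀, hx₀, rfl⟩, hx₀gt⟩ := exists_lt_of_lt_csSup (hne T) h1
    -- continuity and integrability of window averages along the trajectory
    have gcont : ∀ i : ℕ, ContinuousOn (fun t => avg (φ t x₀) (m i)) (Set.Icc 0 T) := by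
      intro i
      have h2 : ContinuousOn (fun x => Iz Φ φ x (m i)) B :=
        Iz_contOn Φ φ B hΦ hφcont (le_of_lt (hmpos i))
      have h3 : ContinuousOn (fun t => Iz Φ φ (φ t x₀) (m i)) (Set.Icc 0 T) :=
        h2.comp ((traj_cont φ B hφcont hx₀).mono (fun t ht => ht.1))
          (fun t ht => hφB x₀ hx₀ t ht.1)
      exact continuousOn_const.mul h3
    have gint : ∀ i : ℕ, IntervalIntegrable (fun t => avg (φ t x₀) (m i))
        MeasureTheory.volume 0 T := by
      intro i
      exact ((gcont i).mono (by rw [Set.uIcc_of_le (le_of_lt hTpos)])).intervalIntegrable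
    -- the integral lower bound per window
    have hInt_i : ∀ i : ℕ, T * avg x₀ T - 2*C*(m i)
        ≤ ∫ t in (0:ℝ)..T, avg (φ t x₀) (m i) := by
      intro i
      have hw := window_lower Φ φ B hΦ hφcont hφB hsg hC (hmpos i) hTpos hx₀
      have heq : (∫ t in (0:ℝ)..T, avg (φ t x₀) (m i))
          = (1/(m i)) * ∫ t in (0:ℝ)..T, Iz Φ φ (φ t x₀) (m i) := by
        rw [← intervalIntegral.integral_const_mul]
      have h5 := mul_le_mul_of_nonneg_left hw (one_div_nonneg.mpr (hmpos i).le)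
      rw [heq]
      refine le_trans (le_of_eq ?_) h5
      have hIzT : Iz Φ φ x₀ T = T * avg x₀ T := by
        show Iz Φ φ x₀ T = T * (1/T * Iz Φ φ x₀ T)
        field_simp
      rw [hIzT]
      have hmne : m i ≠ 0 := ne_of_gt (hmpos i)
      field_simp
    -- the nonnegative defect function
    set hfun : ℝ → ℝ :=
      fun t => ∑ i ∈ Finset.range j, (i+1:ℝ) * (u (m i) - avg (φ t x₀) (m i)) with hhdef
    have hfun_nonneg : ∀ t ∈ Set.Icc (0:ℝ) T, ∀ i ∈ Finset.range j,
        (0:ℝ) ≤ (i+1:ℝ) * (u (m i) - avg (φ t x₀) (m i)) := by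
      intro t ht i _
      have := hu_le (m i) (hmpos i) _ (hφB x₀ hx₀ t ht.1)
      have hipos : (0:ℝ) ≤ (i+1:ℝ) := by positivity
      nlinarith
    have hfun_cont : ContinuousOn hfun (Set.Icc 0 T) := by
      apply continuousOn_finset_sum
      intro i _
      exact continuousOn_const.mul (continuousOn_const.sub (gcont i))
    have hfun_int : IntervalIntegrable hfun MeasureTheory.volume 0 T :=
      (hfun_cont.mono (by rw [Set.uIcc_of_le (le_of_lt hTpos)])).intervalIntegrable
    have hsum_int : (∫ t in (0:ℝ)..T, hfun t)
        = ∑ i ∈ Finset.range j,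
            ((i+1:ℝ) * (T * u (m i) - ∫ t in (0:ℝ)..T, avg (φ t x₀) (m i))) := by
      rw [intervalIntegral.integral_finset_sum]
      · apply Finset.sum_congr rfl
        intro i _
        rw [intervalIntegral.integral_const_mul,
          intervalIntegral.integral_sub intervalIntegrable_const (gint i),
          intervalIntegral.integral_const]
        simp only [smul_eq_mul, sub_zero]
      · intro i _
        exact ((intervalIntegrable_const).sub (gint i)).const_mul _
    have hterm : ∀ i ∈ Finset.range j,
        (i+1:ℝ) * (T * u (m i) - ∫ t in (0:ℝ)..T, avg (φ t x₀) (m i))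
          ≤ T * ((2:ℝ)⁻¹^i/8) + T*η*(i+1) + 2*C*(i+1)*(m i) := by
      intro i _
      have h6 := hInt_i i
      have h7 := (hm i).2.2
      have h8 : Shat - η < avg x₀ T := hx₀gt
      have hβ : (i+1:ℝ) * ((2:ℝ)⁻¹^i/(8*(i+1))) = (2:ℝ)⁻¹^i/8 := by
        field_simp
      have e1 : T * u (m i) ≤ T * (Shat + (2:ℝ)⁻¹^i/(8*(i+1))) :=
        mul_le_mul_of_nonneg_left h7 hTpos.le
      have e2 : T * (Shat - η) ≤ T * avg x₀ T := mul_le_mul_of_nonneg_left h8.le hTpos.le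
      have e3 : T * u (m i) - (∫ t in (0:ℝ)..T, avg (φ t x₀) (m i))
          ≤ T * ((2:ℝ)⁻¹^i/(8*(i+1))) + T*η + 2*C*(m i) := by linarith
      have e4 := mul_le_mul_of_nonneg_left e3 (by positivity : (0:ℝ) ≤ (i+1:ℝ))
      nlinarith [e4, hβ, hTpos.le]
    have hgeom : (∑ i ∈ Finset.range j, ((2:ℝ)⁻¹)^i) ≤ 2 := by
      have := sum_geometric_two_le j
      simpa [one_div] using this
    have hsum_le : (∫ t in (0:ℝ)..T, hfun t) ≤ 3*T/4 := by
      rw [hsum_int]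
      refine le_trans (Finset.sum_le_sum hterm) ?_
      rw [Finset.sum_add_distrib, Finset.sum_add_distrib]
      have s1 : (∑ i ∈ Finset.range j, T * ((2:ℝ)⁻¹^i/8)) ≤ T/4 := by
        have : (∑ i ∈ Finset.range j, T * ((2:ℝ)⁻¹^i/8))
            = (T/8) * ∑ i ∈ Finset.range j, ((2:ℝ)⁻¹)^i := by
          rw [Finset.mul_sum]
          apply Finset.sum_congr rfl
          intro i _
          ring
        rw [this]
        nlinarith [hgeom, hTpos.le]
      have s2 : (∑ i ∈ Finset.range j, T*η*(i+1:ℝ)) ≤ T/4 := by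
        have h13 : (∑ i ∈ Finset.range j, T*η*(i+1:ℝ)) = T*η*Wj := by
          rw [hWjdef, Finset.mul_sum]
        rw [h13]
        have hηW : η * Wj ≤ 1/4 := by
          rw [hηdef]
          rw [div_mul_eq_mul_div, one_mul, div_le_div_iff₀ (by positivity) (by norm_num)]
          nlinarith
        nlinarith [hTpos.le]
      have s3 : (∑ i ∈ Finset.range j, 2*C*(i+1:ℝ)*(m i)) ≤ T/4 := by
        have h14 : (∑ i ∈ Finset.range j, 2*C*(i+1:ℝ)*(m i)) = 2*C*Mj := by
          rw [hMjdef, Finset.mul_sum]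
          apply Finset.sum_congr rfl
          intro i _
          ring
        rw [h14]
        nlinarith
      linarith
    have hex : ∃ t ∈ Set.Icc (0:ℝ) T, hfun t < 1 := by
      by_contra hcon
      push_neg at hcon
      have hint1 : (∫ _ in (0:ℝ)..T, (1:ℝ)) = T := by simp
      have h10 := intervalIntegral.integral_mono_on hTpos.le
        intervalIntegrable_const hfun_int hcon
      rw [hint1] at h10
      linarith
    obtain ⟨t, ht, htlt⟩ := hex
    refine ⟨φ t x₀, hφB x₀ hx₀ t ht.1, ?_⟩
    intro i hij
    have hterm_le : (i+1:ℝ) * (u (m i) - avg (φ t x₀) (m i)) ≤ hfun t :=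
      Finset.single_le_sum (hfun_nonneg t ht) (Finset.mem_range.mpr hij)
    have hipos : (0:ℝ) < (i+1:ℝ) := by positivity
    have h11 : u (m i) - avg (φ t x₀) (m i) < 1/(i+1) := by
      rw [lt_div_iff₀ hipos]
      nlinarith
    have h12 := hS_lb (m i) (hm i).2.1
    linarith
  choose y hyB hyprop using hyj
  obtain ⟨xs, hxsB, κ, hκmono, hκtend⟩ := hB.tendsto_subseq hyB
  -- the limit point satisfies all window bounds
  have hxs_bound : ∀ i : ℕ, Shat - 1/(i+1) ≤ avg xs (m i) := by
    intro i
    have hcont : ContinuousOn (fun x => avg x (m i)) B :=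
      continuousOn_const.mul (Iz_contOn Φ φ B hΦ hφcont (hmpos i).le)
    have htend : Filter.Tendsto (fun l => avg (y (κ l)) (m i)) Filter.atTop
        (𝓝 (avg xs (m i))) := by
      refine ((hcont xs hxsB).tendsto).comp ?_
      rw [tendsto_nhdsWithin_iff]
      exact ⟨hκtend, Filter.Eventually.of_forall (fun l => hyB (κ l))⟩
    refine ge_of_tendsto htend ?_
    rw [Filter.eventually_atTop]
    refine ⟨i+1, fun l hl => ?_⟩
    exact hyprop (κ l) i (lt_of_lt_of_le (Nat.lt_succ_self i) (le_trans hl (hκmono.le_apply)))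
  -- limsup at xs is at least Shat
  have hliminf : Shat ≤ Filter.limsup (fun T : ℝ => avg xs T) Filter.atTop := by
    have hbd : Filter.IsBoundedUnder (· ≤ ·) Filter.atTop (fun T : ℝ => avg xs T) := by
      apply Filter.isBoundedUnder_of_eventually_le (a := C)
      filter_upwards [Filter.eventually_ge_atTop (1:ℝ)] with T hT
      exact (abs_le.mp (havgabs xs hxsB T (lt_of_lt_of_le one_pos hT))).2
    refine le_of_forall_pos_le_add ?_
    intro ε hε
    have hfreq : ∃ᶠ T in Filter.atTop, Shat - ε ≤ avg xs T := by
      rw [Filter.frequently_atTop]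
      intro b
      obtain ⟨i, hi⟩ := exists_nat_ge (max b (1/ε))
      refine ⟨m i, ?_, ?_⟩
      · have h1 : b ≤ (i:ℝ) := le_trans (le_max_left _ _) hi
        linarith [(hm i).1]
      · have h2 : 1/ε ≤ (i:ℝ) := le_trans (le_max_right _ _) hi
        have h3 : 1/((i:ℝ)+1) ≤ ε := by
          rw [div_le_iff₀ (by positivity)]
          have h4 : (1:ℝ)/ε < (i:ℝ)+1 := by linarith
          rw [div_lt_iff₀ hε] at h4
          nlinarith
        have := hxs_bound i
        linarith
    have := Filter.le_limsup_of_frequently_le hfreq hbd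
    linarith
  -- limsup everywhere is at most Shat
  have hlimsup_le : ∀ x ∈ B, Filter.limsup (fun T : ℝ => avg x T) Filter.atTop ≤ Shat := by
    intro x hx
    have hcb : Filter.IsCoboundedUnder (· ≤ ·) Filter.atTop (fun T : ℝ => avg x T) := by
      apply Filter.isCoboundedUnder_le_of_eventually_le Filter.atTop (x := -C)
      filter_upwards [Filter.eventually_ge_atTop (1:ℝ)] with T hT
      exact (abs_le.mp (havgabs x hx T (lt_of_lt_of_le one_pos hT))).1
    have hle_u : ∀ mm : ℝ, 1 ≤ mm →
        Filter.limsup (fun T : ℝ => avg x T) Filter.atTop ≤ u mm := by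
      intro mm hmm
      have hmmpos : 0 < mm := lt_of_lt_of_le one_pos hmm
      refine le_of_forall_pos_le_add ?_
      intro ε hε
      apply Filter.limsup_le_of_le hcb
      filter_upwards [Filter.eventually_ge_atTop (max 1 (2*C*mm/ε))] with T hT
      have hT1 : (1:ℝ) ≤ T := le_trans (le_max_left _ _) hT
      have hTpos : (0:ℝ) < T := lt_of_lt_of_le one_pos hT1
      have h5 := hblock mm T hmmpos hTpos x hx
      have h6 : 2*C*mm/T ≤ ε := by
        rw [div_le_iff₀ hTpos]
        have h7 : 2*C*mm/ε ≤ T := le_trans (le_max_right _ _) hT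
        rw [div_le_iff₀ hε] at h7
        linarith
      linarith
    refine le_csInf ⟨u 1, ⟨1, Set.mem_Ici.mpr le_rfl, rfl⟩⟩ ?_
    rintro v ⟨mm, hmm, rfl⟩
    exact hle_u mm hmm
  exact ⟨xs, hxsB, fun x hx => le_trans (hlimsup_le x hx) hliminf⟩

end SupTimeAvgAux


/-- The supremum over initial conditions in `B` of the long-time
average of `Φ` is attained by some `x₀* ∈ B`. -/
theorem sup_time_average_attained {d : ℕ}
    (f : EuclideanSpace ℝ (Fin d) → EuclideanSpace ℝ (Fin d)) (hf : ContDiff ℝ 1 f)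
    (B : Set (EuclideanSpace ℝ (Fin d))) (hB : IsCompact B) (hBne : B.Nonempty)
    (Φ : EuclideanSpace ℝ (Fin d) → ℝ) (hΦ : Continuous Φ)
    (φ : ℝ → EuclideanSpace ℝ (Fin d) → EuclideanSpace ℝ (Fin d))
    (hφ0 : ∀ x₀ ∈ B, φ 0 x₀ = x₀)
    (hφode : ∀ x₀ ∈ B, ∀ t ≥ (0:ℝ),
      HasDerivWithinAt (fun s => φ s x₀) (f (φ t x₀)) (Set.Ici 0) t)
    (hφB : ∀ x₀ ∈ B, ∀ t ≥ (0:ℝ), φ t x₀ ∈ B)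
    (hφcont : ContinuousOn (fun p : ℝ × EuclideanSpace ℝ (Fin d) => φ p.1 p.2)
      (Set.Ici 0 ×ˢ B)) :
    ∃ x₀ ∈ B, timeAvg Φ (fun t => φ t x₀)
      = sSup ((fun y => timeAvg Φ (fun t => φ t y)) '' B) := by
  obtain ⟨x₀, hx₀, hmax⟩ := SupTimeAvgAux.master f hf B hB hBne Φ hΦ φ hφ0 hφode hφB hφcont
  have hEq : ∀ y : EuclideanSpace ℝ (Fin d), timeAvg Φ (fun t => φ t y)
      = Filter.limsup (fun T : ℝ => (1/T) * SupTimeAvgAux.Iz Φ φ y T) Filter.atTop := by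
    intro y
    apply Filter.limsup_congr
    filter_upwards [Filter.eventually_ge_atTop (0:ℝ)] with T hT
    rw [SupTimeAvgAux.Iz, intervalIntegral.integral_of_le hT]
  refine ⟨x₀, hx₀, ?_⟩
  apply le_antisymm
  · apply le_csSup
    · refine ⟨timeAvg Φ (fun t => φ t x₀), ?_⟩
      rintro v ⟨z, hz, rfl⟩
      beta_reduce
      rw [hEq z, hEq x₀]
      exact hmax z hz
    · exact ⟨x₀, hx₀, rfl⟩
  · apply csSup_le (hBne.image _)
    rintro v ⟨z, hz, rfl⟩
    beta_reduce
    rw [hEq z, hEq x₀]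
    exact hmax z hz
end

section
/- Suppose V* ∈ C¹(B) is an optimal auxiliary function, i.e. max_{x ∈ B}{ Φ(x) + f(x)·∇V*(x) } = Φ̄* where Φ̄* = max_{x₀ ∈ B} Φ̄(x₀). If x(t) is a periodic solution of the ODE contained in B whose long-time average of Φ equals Φ̄*, then x(t) lies in the set S₀ = { x ∈ B : Φ(x) + f(x)·∇V*(x) = Φ̄* } for all t; in particular Φ(x) + f(x)·∇V*(x) = Φ̄* at every point x on the orbit. -/
open Filter MeasureTheory Set
open scoped Topology RealInnerProductSpace

lemma periodic_avg_tendsto {G : ℝ → ℝ} (hG : Continuous G) {p : ℝ} (hp : 0 < p)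
    (hper : Function.Periodic G p) :
    Filter.Tendsto (fun T : ℝ => (1 / T) * ∫ t in Set.Ioc (0:ℝ) T, G t) Filter.atTop
      (𝓝 ((∫ t in (0:ℝ)..p, G t) / p)) := by
  set I := ∫ t in (0:ℝ)..p, G t with hI
  have hint : ∀ a b : ℝ, IntervalIntegrable G MeasureSpace.volume a b :=
    fun a b => hG.intervalIntegrable a b
  obtain ⟨M, hM⟩ : ∃ M : ℝ, ∀ s ∈ Set.Icc (0:ℝ) p, |G s| ≤ M :=
    isCompact_Icc.exists_bound_of_continuousOn hG.continuousOn
  have hM0 : 0 ≤ M := le_trans (abs_nonneg _) (hM 0 ⟨le_rfl, hp.le⟩)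
  set N : ℝ → ℤ := fun T => ⌊T / p⌋ with hN
  set A : ℝ → ℝ := fun T => ((N T : ℝ) / T) * I + (1 / T) * ∫ t in (0:ℝ)..(T - (N T : ℝ) * p), G t
    with hA
  have hr0 : ∀ T : ℝ, 0 ≤ T - (N T : ℝ) * p := fun T => Int.sub_floor_div_mul_nonneg T hp
  have hrp : ∀ T : ℝ, T - (N T : ℝ) * p < p := fun T => Int.sub_floor_div_mul_lt T hp
  have hshift : ∀ T : ℝ, ∀ s : ℝ, G (s + (N T : ℝ) * p) = G s := by
    intro T s
    have := (hper.zsmul (N T)) s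
    simpa [zsmul_eq_mul] using this
  have heq : ∀ T : ℝ, 0 < T → (1 / T) * ∫ t in Set.Ioc (0:ℝ) T, G t = A T := by
    intro T hT
    have h1 : ∫ t in Set.Ioc (0:ℝ) T, G t = ∫ t in (0:ℝ)..T, G t :=
      (intervalIntegral.integral_of_le hT.le).symm
    have h2 : ∫ t in (0:ℝ)..T, G t
        = (∫ t in (0:ℝ)..((N T : ℝ) * p), G t) + ∫ t in ((N T : ℝ) * p)..T, G t :=
      (intervalIntegral.integral_add_adjacent_intervals (hint _ _) (hint _ _)).symm
    have h3 : ∫ t in (0:ℝ)..((N T : ℝ) * p), G t = (N T : ℝ) * I := by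
      have := hper.intervalIntegral_add_zsmul_eq (N T) 0 hint
      simpa [zsmul_eq_mul] using this
    have h4 : ∫ t in ((N T : ℝ) * p)..T, G t = ∫ t in (0:ℝ)..(T - (N T : ℝ) * p), G t := by
      calc ∫ t in ((N T : ℝ) * p)..T, G t
          = ∫ t in ((0:ℝ) + (N T : ℝ) * p)..(T - (N T : ℝ) * p + (N T : ℝ) * p), G t := by
            congr 1 <;> ring
        _ = ∫ t in (0:ℝ)..(T - (N T : ℝ) * p), G (t + (N T : ℝ) * p) :=
            (intervalIntegral.integral_comp_add_right _ _).symm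
        _ = ∫ t in (0:ℝ)..(T - (N T : ℝ) * p), G t :=
            intervalIntegral.integral_congr fun s _ => hshift T s
    rw [h1, h2, h3, h4, hA]
    ring
  have hinv : Tendsto (fun T : ℝ => 1 / T) atTop (𝓝 0) := by
    simpa [one_div] using tendsto_inv_atTop_zero
  have hnT : Tendsto (fun T : ℝ => ((N T : ℝ) / T)) atTop (𝓝 (1 / p)) := by
    have hlow : Tendsto (fun T : ℝ => 1 / p - 1 / T) atTop (𝓝 (1 / p)) := by
      simpa using tendsto_const_nhds (x := (1:ℝ)/p) (f := atTop (α := ℝ)) |>.sub hinv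
    refine tendsto_of_tendsto_of_tendsto_of_le_of_le' hlow tendsto_const_nhds ?_ ?_
    · filter_upwards [eventually_gt_atTop (0:ℝ)] with T hT
      have h1 : T / p - 1 < (N T : ℝ) := Int.sub_one_lt_floor (T / p)
      have h2 : (T / p - 1) / T ≤ (N T : ℝ) / T := by gcongr
      calc 1 / p - 1 / T = (T / p - 1) / T := by field_simp
        _ ≤ (N T : ℝ) / T := h2
    · filter_upwards [eventually_gt_atTop (0:ℝ)] with T hT
      have h1 : (N T : ℝ) ≤ T / p := Int.floor_le (T / p)
      calc (N T : ℝ) / T ≤ (T / p) / T := by gcongr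
        _ = 1 / p := by field_simp
  have hrem : Tendsto (fun T : ℝ => (1 / T) * ∫ t in (0:ℝ)..(T - (N T : ℝ) * p), G t)
      atTop (𝓝 0) := by
    refine squeeze_zero_norm' (a := fun T : ℝ => (1 / T) * (M * p)) ?_ ?_
    · filter_upwards [eventually_gt_atTop (0:ℝ)] with T hT
      have hb : ‖∫ t in (0:ℝ)..(T - (N T : ℝ) * p), G t‖ ≤ M * |T - (N T : ℝ) * p - 0| := by
        apply intervalIntegral.norm_integral_le_of_norm_le_const
        intro s hs
        rw [Set.uIoc_of_le (hr0 T)] at hs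
        exact hM s ⟨hs.1.le, hs.2.trans (hrp T).le⟩
      have hb2 : ‖∫ t in (0:ℝ)..(T - (N T : ℝ) * p), G t‖ ≤ M * p := by
        refine hb.trans ?_
        have h5 : |T - (N T : ℝ) * p - 0| ≤ p := by
          rw [sub_zero, abs_of_nonneg (hr0 T)]; exact (hrp T).le
        exact mul_le_mul_of_nonneg_left h5 hM0
      rw [norm_mul]
      calc ‖1 / T‖ * ‖∫ t in (0:ℝ)..(T - (N T : ℝ) * p), G t‖
          ≤ ‖1 / T‖ * (M * p) := by gcongr
        _ = (1 / T) * (M * p) := by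
            rw [Real.norm_eq_abs, abs_of_pos (by positivity : (0:ℝ) < 1 / T)]
    · simpa using hinv.mul_const (M * p)
  have hAT : Tendsto A atTop (𝓝 (I / p)) := by
    have h := (hnT.mul_const I).add hrem
    have h2 : I / p = 1 / p * I + 0 := by ring
    rw [hA, h2]
    exact h
  refine Tendsto.congr' ?_ hAT
  filter_upwards [eventually_gt_atTop (0:ℝ)] with T hT using (heq T hT).symm


lemma periodic_nonneg_integral_zero {h : ℝ → ℝ} (hc : Continuous h) {p : ℝ} (hp : 0 < p)
    (hper : Function.Periodic h p) (hnn : ∀ t, 0 ≤ h t)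
    (hz : ∫ t in (0:ℝ)..p, h t = 0) : ∀ t, h t = 0 := by
  intro t₀
  by_contra hne
  have hpos : 0 < h t₀ := lt_of_le_of_ne (hnn t₀) (Ne.symm hne)
  have hint : ∀ a b : ℝ, IntervalIntegrable h MeasureSpace.volume a b :=
    fun a b => hc.intervalIntegrable a b
  have hshift : ∫ s in (t₀ - p/2)..((t₀ - p/2) + p), h s = 0 := by
    rw [hper.intervalIntegral_add_eq (t₀ - p/2) 0]
    simpa using hz
  have hopen : IsOpen (h ⁻¹' Set.Ioi (h t₀ / 2)) := isOpen_Ioi.preimage hc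
  have ht₀mem : t₀ ∈ h ⁻¹' Set.Ioi (h t₀ / 2) := by
    simp only [Set.mem_preimage, Set.mem_Ioi]; linarith
  obtain ⟨ε, hε0, hball⟩ := Metric.isOpen_iff.mp hopen t₀ ht₀mem
  set δ := min (ε / 2) (p / 4) with hδdef
  have hδ0 : 0 < δ := lt_min (by linarith) (by linarith)
  have hδε : δ ≤ ε / 2 := min_le_left _ _
  have hδp : δ ≤ p / 4 := min_le_right _ _
  have hmid : ∀ s ∈ Set.Ioo (t₀ - δ) (t₀ + δ), 0 < h s := by
    intro s hs
    have hsball : s ∈ Metric.ball t₀ ε := by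
      rw [Real.ball_eq_Ioo]
      exact ⟨by linarith [hs.1], by linarith [hs.2]⟩
    have := hball hsball
    simp only [Set.mem_preimage, Set.mem_Ioi] at this
    linarith
  have h1 : ∫ s in (t₀ - p/2)..((t₀ - p/2) + p), h s
      = (∫ s in (t₀ - p/2)..(t₀ - δ), h s) + ((∫ s in (t₀ - δ)..(t₀ + δ), h s)
        + ∫ s in (t₀ + δ)..((t₀ - p/2) + p), h s) := by
    rw [intervalIntegral.integral_add_adjacent_intervals (hint _ _) (hint _ _),
      intervalIntegral.integral_add_adjacent_intervals (hint _ _) (hint _ _)]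
  have hn1 : 0 ≤ ∫ s in (t₀ - p/2)..(t₀ - δ), h s :=
    intervalIntegral.integral_nonneg (by linarith) (fun u _ => hnn u)
  have hn2 : 0 ≤ ∫ s in (t₀ + δ)..((t₀ - p/2) + p), h s :=
    intervalIntegral.integral_nonneg (by linarith) (fun u _ => hnn u)
  have hmidpos : 0 < ∫ s in (t₀ - δ)..(t₀ + δ), h s :=
    intervalIntegral.intervalIntegral_pos_of_pos_on (hint _ _) hmid (by linarith)
  rw [hshift] at h1
  linarith

/-- Suppose `V*` is an optimal auxiliary function, i.e.
`max_{x ∈ B}{Φ(x) + f(x)·∇V*(x)} = Φ̄*` where `Φ̄* = max_{x₀ ∈ B} Φ̄(x₀)`. If `x(t)` is a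
periodic solution of the ODE contained in `B` whose long-time average of `Φ` equals `Φ̄*`,
then `Φ(x(t)) + f(x(t))·∇V*(x(t)) = Φ̄*` for all `t`, i.e. the orbit lies in the set `S₀`. -/
theorem maximal_periodic_orbit_lies_in_S0 {d : ℕ}
    (f : EuclideanSpace ℝ (Fin d) → EuclideanSpace ℝ (Fin d)) (hf : ContDiff ℝ 1 f)
    (B : Set (EuclideanSpace ℝ (Fin d))) (hB : IsCompact B) (hBne : B.Nonempty)
    (Φ : EuclideanSpace ℝ (Fin d) → ℝ) (hΦ : Continuous Φ)
    (φ : ℝ → EuclideanSpace ℝ (Fin d) → EuclideanSpace ℝ (Fin d))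
    (hφ0 : ∀ x₀ ∈ B, φ 0 x₀ = x₀)
    (hφode : ∀ x₀ ∈ B, ∀ t ≥ (0:ℝ),
      HasDerivWithinAt (fun s => φ s x₀) (f (φ t x₀)) (Set.Ici 0) t)
    (hφB : ∀ x₀ ∈ B, ∀ t ≥ (0:ℝ), φ t x₀ ∈ B)
    (Φstar : ℝ)
    (hΦstar : IsGreatest ((fun x₀ => timeAvg Φ (fun t => φ t x₀)) '' B) Φstar)
    (V : EuclideanSpace ℝ (Fin d) → ℝ) (hV : ContDiff ℝ 1 V)
    (hVopt : sSup ((fun y => Φ y + ⟪f y, gradient V y⟫) '' B) = Φstar)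
    (x : ℝ → EuclideanSpace ℝ (Fin d))
    (hxode : ∀ t : ℝ, HasDerivAt x (f (x t)) t)
    (hxB : ∀ t : ℝ, x t ∈ B)
    (p : ℝ) (hp : 0 < p) (hper : ∀ t : ℝ, x (t + p) = x t)
    (hxavg : timeAvg Φ x = Φstar) :
    ∀ t : ℝ, Φ (x t) + ⟪f (x t), gradient V (x t)⟫ = Φstar := by
  have hxc : Continuous x := continuous_iff_continuousAt.2 fun t => (hxode t).continuousAt
  have hgradc : Continuous (fun y : EuclideanSpace ℝ (Fin d) => gradient V y) := by
    have h1 : Continuous (fun y : EuclideanSpace ℝ (Fin d) => fderiv ℝ V y) :=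
      hV.continuous_fderiv one_ne_zero
    exact (InnerProductSpace.toDual ℝ (EuclideanSpace ℝ (Fin d))).symm.continuous.comp h1
  have hkey : ∀ y : EuclideanSpace ℝ (Fin d), ⟪f y, gradient V y⟫ = fderiv ℝ V y (f y) := by
    intro y
    rw [real_inner_comm]
    exact InnerProductSpace.toDual_symm_apply
  have hGc : Continuous (fun y : EuclideanSpace ℝ (Fin d) => Φ y + ⟪f y, gradient V y⟫) :=
    hΦ.add (hf.continuous.inner hgradc)
  set g : ℝ → ℝ := fun t => Φ (x t) + ⟪f (x t), gradient V (x t)⟫ with hgdef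
  have hgc : Continuous g := hGc.comp hxc
  have hgle : ∀ t, g t ≤ Φstar := by
    intro t
    rw [← hVopt]
    exact le_csSup (hB.image hGc).bddAbove ⟨x t, hxB t, rfl⟩
  have hperΦ : Function.Periodic (fun t => Φ (x t)) p := fun t => by simp [hper t]
  have hperg : Function.Periodic g p := fun t => by simp [hgdef, hper t]
  have hVx : ∀ t, HasDerivAt (fun s => V (x s)) (⟪f (x t), gradient V (x t)⟫) t := by
    intro t
    have h1 := ((hV.differentiable one_ne_zero) (x t)).hasFDerivAt.comp_hasDerivAt t (hxode t)
    rw [hkey]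
    exact h1
  have hinnc : Continuous (fun t => ⟪f (x t), gradient V (x t)⟫) :=
    (hf.continuous.comp hxc).inner (hgradc.comp hxc)
  have hftc : ∫ t in (0:ℝ)..p, ⟪f (x t), gradient V (x t)⟫ = 0 := by
    rw [intervalIntegral.integral_eq_sub_of_hasDerivAt (fun t _ => hVx t)
      (hinnc.intervalIntegrable 0 p)]
    have hx0 : x p = x 0 := by simpa using hper 0
    rw [hx0, sub_self]
  have hΦxc : Continuous (fun t => Φ (x t)) := hΦ.comp hxc
  have hgint : ∫ t in (0:ℝ)..p, g t = ∫ t in (0:ℝ)..p, Φ (x t) := by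
    have h1 : ∫ t in (0:ℝ)..p, g t
        = (∫ t in (0:ℝ)..p, Φ (x t)) + ∫ t in (0:ℝ)..p, ⟪f (x t), gradient V (x t)⟫ := by
      rw [hgdef]
      exact intervalIntegral.integral_add (hΦxc.intervalIntegrable 0 p)
        (hinnc.intervalIntegrable 0 p)
    rw [h1, hftc, add_zero]
  have havg := periodic_avg_tendsto (G := fun t => Φ (x t)) hΦxc hp hperΦ
  have hlim : timeAvg Φ x = (∫ t in (0:ℝ)..p, Φ (x t)) / p := by
    rw [timeAvg]
    exact havg.limsup_eq
  have hIeq : ∫ t in (0:ℝ)..p, Φ (x t) = Φstar * p := by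
    have h1 : (∫ t in (0:ℝ)..p, Φ (x t)) / p = Φstar := by rw [← hlim, hxavg]
    field_simp at h1
    linarith
  have hz : ∫ t in (0:ℝ)..p, (Φstar - g t) = 0 := by
    rw [intervalIntegral.integral_sub (intervalIntegrable_const) (hgc.intervalIntegrable 0 p),
      hgint, hIeq, intervalIntegral.integral_const]
    simp [mul_comm]
  have hzero := periodic_nonneg_integral_zero (continuous_const.sub hgc) hp
    (fun t => by simp [hperg t]) (fun t => sub_nonneg.2 (hgle t)) hz
  intro t
  have := hzero t
  have hgt : g t = Φstar := by simp only [Pi.sub_apply] at this; linarith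
  exact hgt
end
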